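/- For every n ≥ 3, the gear graph G_n on 2n+1 vertices is a partial cube. -/

import Mathlib

open SimpleGraph

/-- The hypercube graph `Q_d` on `{0,1}^d`: two vertices are adjacent iff they
differ in exactly one coordinate. -/
def hypercubeGraph (d : ℕ) : SimpleGraph (Fin d → Bool) where
  Adj x y := hammingDist x y = 1
  symm := by
    constructor
    intro x y h
    rwa [hammingDist_comm]
  loopless := by
    constructor
    intro x h
    simp [hammingDist_self] at h

/-- A partial cube: a connected simple graph admitting an isometric embedding
into some hypercube. -/
def IsPartialCube {V : Type} (G : SimpleGraph V) : Prop :=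
  G.Connected ∧
    ∃ (d : ℕ) (φ : V → (Fin d → Bool)), Function.Injective φ ∧
      ∀ v w : V, (hypercubeGraph d).dist (φ v) (φ w) = G.dist v w

/-- The gear graph (cogwheel) `G_n` on `2n+1` vertices: a cycle of length `2n`
(the rim) together with a hub (`none`) adjacent to every second vertex of the
cycle. -/
def gearGraph (n : ℕ) : SimpleGraph (Option (Fin (2 * n))) :=
  SimpleGraph.fromRel fun a b =>
    match a, b with
    | some i, some j => (j : ℕ) = ((i : ℕ) + 1) % (2 * n)
    | none, some i => (i : ℕ) % 2 = 0
    | _, _ => False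

/-!
Send the hub to `0`, the rim vertex `2k` to `e k` and `2k + 1` to `e k + e (k + 1)` (indices
mod `n`). Adjacent vertices go to adjacent cube vertices, so the Hamming distance never exceeds
the graph distance. For the converse it suffices to find, for each pair `u, v`, a vertex `w`
whose image lies on a cube geodesic from the image of `u` to that of `v` and for which the
bound is already known for `u, w` and `w, v`. If the images of two rim vertices have disjoint
supports the hub is such a `w`; otherwise, as `n ≥ 3`, the two vertices are equal, adjacent,
or odd with a common even neighbour, which then serves as `w`.
-/

section Hamming

variable {ι β : Type*} [Fintype ι] [DecidableEq β] {x y z : ι → β}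

lemma hammingDist_eq_one_of_forall_ne_iff (c : ι) (h : ∀ j, x j ≠ y j ↔ j = c) :
    hammingDist x y = 1 := by
  rw [hammingDist, Finset.card_eq_one]
  exact ⟨c, by ext j; simp [h j]⟩

lemma hammingDist_eq_add_of_forall_eq_or_eq (h : ∀ j, x j = z j ∨ y j = z j) :
    hammingDist x y = hammingDist x z + hammingDist z y := by
  classical
  rw [hammingDist, hammingDist, hammingDist, ← Finset.card_union_of_disjoint]
  · congr 1
    ext j
    simp only [Finset.mem_filter, Finset.mem_univ, true_and, Finset.mem_union]
    grind [h j]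
  · rw [Finset.disjoint_filter]
    grind

end Hamming

namespace SimpleGraph

variable {V ι β : Type*} [Fintype ι] [DecidableEq β] {G : SimpleGraph V} {f : V → ι → β}

lemma Walk.hammingDist_le_length (hf : ∀ a b, G.Adj a b → hammingDist (f a) (f b) ≤ 1)
    {u v : V} (p : G.Walk u v) : hammingDist (f u) (f v) ≤ p.length := by
  induction p with
  | nil => simp
  | @cons a b c hab p ih =>
    rw [Walk.length_cons]
    linarith [hammingDist_triangle (f a) (f b) (f c), hf a b hab]

lemma Reachable.hammingDist_le_dist (hf : ∀ a b, G.Adj a b → hammingDist (f a) (f b) ≤ 1)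
    {u v : V} (h : G.Reachable u v) : hammingDist (f u) (f v) ≤ G.dist u v := by
  obtain ⟨p, hp⟩ := h.exists_walk_length_eq_dist
  exact hp ▸ p.hammingDist_le_length hf

lemma Connected.dist_le_hammingDist_of_forall_eq_or_eq (hG : G.Connected) {u v w : V}
    (huw : G.dist u w ≤ hammingDist (f u) (f w)) (hwv : G.dist w v ≤ hammingDist (f w) (f v))
    (hw : ∀ j, f u j = f w j ∨ f v j = f w j) :
    G.dist u v ≤ hammingDist (f u) (f v) := by
  rw [hammingDist_eq_add_of_forall_eq_or_eq hw]
  exact hG.dist_triangle.trans (add_le_add huw hwv)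

end SimpleGraph

lemma hypercubeGraph_exists_walk_length_eq_hammingDist {d : ℕ} (x y : Fin d → Bool) :
    ∃ p : (hypercubeGraph d).Walk x y, p.length = hammingDist x y := by
  induction h : hammingDist x y generalizing x with
  | zero =>
    obtain rfl := hammingDist_eq_zero.mp h
    exact ⟨.nil, rfl⟩
  | succ m ih =>
    obtain ⟨j, hj⟩ : ∃ j, x j ≠ y j := by
      by_contra! hxy
      simp [funext hxy] at h
    set x' := Function.update x j (y j)
    have hxx' : (hypercubeGraph d).Adj x x' :=
      hammingDist_eq_one_of_forall_ne_iff j fun i => by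
        by_cases hi : i = j <;> simp [x', hi, hj]
    have hsplit : hammingDist x y = hammingDist x x' + hammingDist x' y :=
      hammingDist_eq_add_of_forall_eq_or_eq fun i => by
        by_cases hi : i = j <;> simp [x', hi]
    obtain ⟨p, hp⟩ := ih x' (by rw [hxx'] at hsplit; omega)
    exact ⟨.cons hxx' p, by simp [hp]⟩

lemma hypercubeGraph_dist {d : ℕ} (x y : Fin d → Bool) :
    (hypercubeGraph d).dist x y = hammingDist x y := by
  obtain ⟨p, hp⟩ := hypercubeGraph_exists_walk_length_eq_hammingDist x y
  exact le_antisymm (hp ▸ SimpleGraph.dist_le p)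
    (SimpleGraph.Reachable.hammingDist_le_dist (G := hypercubeGraph d) (f := id)
      (fun _ _ h => h.le) ⟨p⟩)

lemma isPartialCube_of_dist_le_hammingDist {V : Type} {G : SimpleGraph V} {d : ℕ}
    (hG : G.Connected) (f : V → Fin d → Bool)
    (hadj : ∀ u v, G.Adj u v → hammingDist (f u) (f v) ≤ 1)
    (hdist : ∀ u v, G.dist u v ≤ hammingDist (f u) (f v)) : IsPartialCube G := by
  refine ⟨hG, d, f, fun u v huv => ?_, fun u v => ?_⟩
  · simpa [huv, hG.dist_eq_zero_iff] using hdist u v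
  · rw [hypercubeGraph_dist]
    exact le_antisymm ((hG.preconnected u v).hammingDist_le_dist hadj) (hdist u v)

lemma Nat.mod_eq_self_or_eq_zero_of_le {a m : ℕ} (h : a ≤ m) :
    a < m ∧ a % m = a ∨ a = m ∧ a % m = 0 := by
  rcases h.lt_or_eq with h | rfl
  · exact .inl ⟨h, Nat.mod_eq_of_lt h⟩
  · exact .inr ⟨rfl, Nat.mod_self a⟩

def gearGraph.embedding (n : ℕ) : Option (Fin (2 * n)) → Fin n → Bool
  | none => fun _ => false
  | some i => fun j => decide ((j : ℕ) = i / 2 ∨ (j : ℕ) = (i + 1) / 2 % n)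

namespace gearGraph

variable {n : ℕ}

lemma adj_none_some_iff {i : Fin (2 * n)} :
    (gearGraph n).Adj none (some i) ↔ (i : ℕ) % 2 = 0 := by
  simp [gearGraph]

lemma adj_some_some_iff {i j : Fin (2 * n)} :
    (gearGraph n).Adj (some i) (some j) ↔
      ((j : ℕ) = i + 1 ∨ (i : ℕ) + 1 = 2 * n ∧ (j : ℕ) = 0) ∨
        ((i : ℕ) = j + 1 ∨ (j : ℕ) + 1 = 2 * n ∧ (i : ℕ) = 0) := by
  have hi := Nat.mod_eq_self_or_eq_zero_of_le (show (i : ℕ) + 1 ≤ 2 * n from i.isLt)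
  have hj := Nat.mod_eq_self_or_eq_zero_of_le (show (j : ℕ) + 1 ≤ 2 * n from j.isLt)
  simp only [gearGraph, fromRel_adj, ne_eq, Option.some.injEq, Fin.ext_iff]
  omega

lemma exists_adj_none_adj_of_odd {i : Fin (2 * n)} (hi : (i : ℕ) % 2 = 1) :
    ∃ w : Fin (2 * n), (w : ℕ) + 1 = i ∧
      (gearGraph n).Adj none (some w) ∧ (gearGraph n).Adj (some w) (some i) :=
  ⟨⟨i - 1, by omega⟩, by simp only; omega, adj_none_some_iff.mpr (by simp only; omega),
    adj_some_some_iff.mpr (by simp only; omega)⟩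

lemma connected (n : ℕ) : (gearGraph n).Connected := by
  have hub : ∀ v, (gearGraph n).Reachable none v := by
    rintro (_ | i)
    · rfl
    rcases Nat.mod_two_eq_zero_or_one i with hi | hi
    · exact (adj_none_some_iff.mpr hi).reachable
    · obtain ⟨w, -, hw, hwi⟩ := exists_adj_none_adj_of_odd hi
      exact hw.reachable.trans hwi.reachable
  exact (connected_iff _).mpr ⟨fun u v => (hub u).symm.trans (hub v), ⟨none⟩⟩

lemma embedding_none (j : Fin n) : embedding n none j = false := rfl

lemma embedding_some (i : Fin (2 * n)) (j : Fin n) :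
    embedding n (some i) j =
      decide ((j : ℕ) = i / 2 ∨ (j : ℕ) = (i + 1) / 2 ∨ (i : ℕ) + 1 = 2 * n ∧ (j : ℕ) = 0) := by
  have := Nat.mod_eq_self_or_eq_zero_of_le (show ((i : ℕ) + 1) / 2 ≤ n by omega)
  simp only [embedding, decide_eq_decide]
  omega

lemma hammingDist_embedding_some_some (hn : 2 ≤ n) {i j : Fin (2 * n)}
    (h : (j : ℕ) = i + 1 ∨ (i : ℕ) + 1 = 2 * n ∧ (j : ℕ) = 0) :
    hammingDist (embedding n (some i)) (embedding n (some j)) = 1 := by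
  obtain ⟨k, hk | hk⟩ := Nat.even_or_odd' (i : ℕ)
  · have := Nat.mod_eq_self_or_eq_zero_of_le (show k + 1 ≤ n by omega)
    refine hammingDist_eq_one_of_forall_ne_iff ⟨(k + 1) % n, Nat.mod_lt _ (by omega)⟩ fun c => ?_
    simp only [embedding_some, ne_eq, decide_eq_decide, Fin.ext_iff]
    omega
  · refine hammingDist_eq_one_of_forall_ne_iff ⟨k, by omega⟩ fun c => ?_
    simp only [embedding_some, ne_eq, decide_eq_decide, Fin.ext_iff]
    omega

lemma hammingDist_embedding_of_adj (hn : 2 ≤ n) {u v : Option (Fin (2 * n))}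
    (h : (gearGraph n).Adj u v) : hammingDist (embedding n u) (embedding n v) = 1 := by
  have hub (i : Fin (2 * n)) (hi : (gearGraph n).Adj none (some i)) :
      hammingDist (embedding n none) (embedding n (some i)) = 1 := by
    rw [adj_none_some_iff] at hi
    refine hammingDist_eq_one_of_forall_ne_iff ⟨i / 2, by omega⟩ fun c => ?_
    simp only [embedding_some, embedding_none, ne_eq, Fin.ext_iff, Bool.false_eq,
      decide_eq_false_iff_not, not_not]
    omega
  match u, v, h with
  | none, some i, h => exact hub i h
  | some i, none, h => rw [hammingDist_comm, hub i h.symm]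
  | some i, some j, h =>
    rcases adj_some_some_iff.mp h with h | h
    · exact hammingDist_embedding_some_some hn h
    · rw [hammingDist_comm, hammingDist_embedding_some_some hn h]

lemma dist_le_hammingDist_of_adj (hn : 2 ≤ n) {u v : Option (Fin (2 * n))}
    (h : (gearGraph n).Adj u v) :
    (gearGraph n).dist u v ≤ hammingDist (embedding n u) (embedding n v) := by
  rw [dist_eq_one_iff_adj.mpr h, hammingDist_embedding_of_adj hn h]

lemma dist_none_some_le (hn : 2 ≤ n) (i : Fin (2 * n)) :
    (gearGraph n).dist none (some i) ≤
      hammingDist (embedding n none) (embedding n (some i)) := by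
  rcases Nat.mod_two_eq_zero_or_one i with hi | hi
  · exact dist_le_hammingDist_of_adj hn (adj_none_some_iff.mpr hi)
  obtain ⟨w, hwi, hw, hwi'⟩ := exists_adj_none_adj_of_odd hi
  refine (connected n).dist_le_hammingDist_of_forall_eq_or_eq
    (dist_le_hammingDist_of_adj hn hw) (dist_le_hammingDist_of_adj hn hwi') fun j => ?_
  simp only [embedding_some, embedding_none, Bool.false_eq, decide_eq_false_iff_not,
    decide_eq_decide]
  omega

lemma dist_some_some_le_of_odd (hn : 3 ≤ n) {i i' : Fin (2 * n)} (hi : (i : ℕ) % 2 = 1)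
    (hi' : (i' : ℕ) = i + 2 ∨ (i' : ℕ) + 2 * n = i + 2) :
    (gearGraph n).dist (some i) (some i') ≤
      hammingDist (embedding n (some i)) (embedding n (some i')) := by
  obtain ⟨w, hwi', -, hw⟩ := exists_adj_none_adj_of_odd (i := i') (by omega)
  have hiw : (gearGraph n).Adj (some i) (some w) := adj_some_some_iff.mpr (by omega)
  refine (connected n).dist_le_hammingDist_of_forall_eq_or_eq
    (dist_le_hammingDist_of_adj (by omega) hiw) (dist_le_hammingDist_of_adj (by omega) hw)
    fun j => ?_
  simp only [embedding_some, decide_eq_decide]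
  omega

lemma dist_some_some_le (hn : 3 ≤ n) (i i' : Fin (2 * n)) :
    (gearGraph n).dist (some i) (some i') ≤
      hammingDist (embedding n (some i)) (embedding n (some i')) := by
  by_cases hdisj : ∀ j, embedding n (some i) j = false ∨ embedding n (some i') j = false
  · refine (connected n).dist_le_hammingDist_of_forall_eq_or_eq (w := none) ?_
      (dist_none_some_le (by omega) i') hdisj
    rw [dist_comm, hammingDist_comm]
    exact dist_none_some_le (by omega) i
  push Not at hdisj
  obtain ⟨c, hc, hc'⟩ := hdisj
  simp only [embedding_some, ne_eq, Bool.not_eq_false, decide_eq_true_eq] at hc hc'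
  have := i.isLt
  have := i'.isLt
  have := c.isLt
  rcases (by omega : (i : ℕ) = i' ∨
      (((i' : ℕ) = i + 1 ∨ (i : ℕ) + 1 = 2 * n ∧ (i' : ℕ) = 0) ∨
        ((i : ℕ) = i' + 1 ∨ (i' : ℕ) + 1 = 2 * n ∧ (i : ℕ) = 0)) ∨
      ((i : ℕ) % 2 = 1 ∧ ((i' : ℕ) = i + 2 ∨ (i' : ℕ) + 2 * n = i + 2)) ∨
      ((i' : ℕ) % 2 = 1 ∧ ((i : ℕ) = i' + 2 ∨ (i : ℕ) + 2 * n = i' + 2)))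
    with h | h | ⟨hi, h⟩ | ⟨hi', h⟩
  · simp [Fin.ext h]
  · exact dist_le_hammingDist_of_adj (by omega) (adj_some_some_iff.mpr h)
  · exact dist_some_some_le_of_odd hn hi h
  · rw [dist_comm, hammingDist_comm]
    exact dist_some_some_le_of_odd hn hi' h

lemma dist_le_hammingDist (hn : 3 ≤ n) (u v : Option (Fin (2 * n))) :
    (gearGraph n).dist u v ≤ hammingDist (embedding n u) (embedding n v) := by
  match u, v with
  | none, none => simp
  | none, some i => exact dist_none_some_le (by omega) i
  | some i, none =>
    rw [dist_comm, hammingDist_comm]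
    exact dist_none_some_le (by omega) i
  | some i, some i' => exact dist_some_some_le hn i i'

end gearGraph

/-- For every `n ≥ 3`, the gear graph `G_n` on `2n+1` vertices is a partial
cube. -/
theorem gearGraph_isPartialCube (n : ℕ) (hn : 3 ≤ n) :
    IsPartialCube (gearGraph n) :=
  isPartialCube_of_dist_le_hammingDist (gearGraph.connected n) (gearGraph.embedding n)
    (fun _ _ h => (gearGraph.hammingDist_embedding_of_adj (by omega) h).le)
    (gearGraph.dist_le_hammingDist hn)
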